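/- arXiv:1903.07548 — 3 statements merged into one kernel-verified Lean document; each statement's English description precedes it below -/
import Mathlib

section
/- Let G be a finite additive abelian group and Σ=(Γ=(V,E),σ) a signed graph with an orientation ω compatible with σ. Define the difference operator δ: G^V → G^E by (δg)(e) := ω(v,e)·g(v) + ω(u,e)·g(u) for each edge e=uv (for a loop e at v, the two half-edge terms are both at v). Then δ is a group homomorphism under pointwise addition, its image is contained in the group of G-tensions of Σ, and its kernel is isomorphic to G^{k_b(Σ)} × (G₂)^{k_u(Σ)}, where G₂ = {x ∈ G : 2x = 0}. -/
attribute [local instance] Classical.propDecidable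

noncomputable section SignedGraphs

/-- A signed graph: a multigraph with ordered pairs of endpoints (the order is
an artefact of the encoding) together with a sign `±1` on each edge. -/
structure SGraph (V : Type*) (E : Type*) where
  ends : E → V × V
  sign : E → ℤˣ

namespace SGraph

variable {V E : Type*}

/-- Endpoint of `e` on side `b`; a loop has both endpoints equal, but its two
half-edges are distinguished by the side `b`. -/
def endpt (Γ : SGraph V E) (e : E) (b : Bool) : V :=
  cond b (Γ.ends e).1 (Γ.ends e).2

/-- `e` is a loop of the underlying graph. -/
def IsLoop (Γ : SGraph V E) (e : E) : Prop := (Γ.ends e).1 = (Γ.ends e).2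

/-- Walks in a signed multigraph: a step traverses an edge `e` in direction `d`
(from the side-`d` endpoint to the other endpoint). -/
inductive Walk (Γ : SGraph V E) : V → V → Type _
  | nil (v : V) : Walk Γ v v
  | cons (e : E) (d : Bool) {w : V} (p : Walk Γ (Γ.endpt e (!d)) w) : Walk Γ (Γ.endpt e d) w

namespace Walk

variable {Γ : SGraph V E}

/-- The list of vertices visited by a walk (including the final one). -/
def verts : ∀ {u v : V}, Γ.Walk u v → List V
  | _, _, .nil x => [x]
  | _, _, .cons e d p => Γ.endpt e d :: p.verts

/-- The list of edges traversed by a walk. -/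
def edges : ∀ {u v : V}, Γ.Walk u v → List E
  | _, _, .nil _ => []
  | _, _, .cons e _ p => e :: p.edges

/-- The list of (edge, direction) steps of a walk. -/
def steps : ∀ {u v : V}, Γ.Walk u v → List (E × Bool)
  | _, _, .nil _ => []
  | _, _, .cons e d p => (e, d) :: p.steps

/-- The sources of the steps of a walk, i.e. all visited vertices except the last. -/
def srcs {u v : V} (W : Γ.Walk u v) : List V := W.verts.dropLast

/-- The sign of a walk: the product of the signs of its edges. -/
def sgn : ∀ {u v : V}, Γ.Walk u v → ℤˣ
  | _, _, .nil _ => 1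
  | _, _, .cons e _ p => Γ.sign e * p.sgn

/-- Concatenation of walks. -/
def append : ∀ {u v w : V}, Γ.Walk u v → Γ.Walk v w → Γ.Walk u w
  | _, _, _, .nil _, q => q
  | _, _, _, .cons e d p, q => .cons e d (p.append q)

/-- The sum `Σᵢ f(eᵢ)` of the values of `f` on the edges of the walk,
with multiplicity. -/
def edgeSum {G : Type*} [AddCommGroup G] (f : E → G) {u v : V} (W : Γ.Walk u v) : G :=
  (W.edges.map f).sum

/-- The sum `Σᵢ ω(vᵢ,eᵢ)·(Π_{j<i} σ(eⱼ))·f(eᵢ)` along a walk, where `ω(vᵢ,eᵢ)`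
is the value of `ω` on the half-edge by which the walk leaves `vᵢ`. -/
def tensionSum {G : Type*} [AddCommGroup G] (ω : E → Bool → ℤˣ) (f : E → G) :
    ∀ {u v : V}, Γ.Walk u v → G
  | _, _, .nil _ => 0
  | _, _, .cons e d p => ((ω e d : ℤ) • f e) + ((Γ.sign e : ℤ) • tensionSum ω f p)

/-- `Q` is the reverse of the walk `P`. -/
def IsReverseOf {u v : V} (Q : Γ.Walk v u) (P : Γ.Walk u v) : Prop :=
  Q.steps = P.steps.reverse.map fun s => (s.1, !s.2)

end Walk

/-- A closed walk is a cycle if it is nontrivial, visits no vertex twice and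
uses no edge twice. -/
def IsCycle (Γ : SGraph V E) {v : V} (W : Γ.Walk v v) : Prop :=
  W.edges ≠ [] ∧ W.srcs.Nodup ∧ W.edges.Nodup

/-- A balanced (positive) cycle. -/
def IsBalancedCycle (Γ : SGraph V E) {v : V} (W : Γ.Walk v v) : Prop :=
  Γ.IsCycle W ∧ W.sgn = 1

/-- An unbalanced (negative) cycle. -/
def IsUnbalancedCycle (Γ : SGraph V E) {v : V} (W : Γ.Walk v v) : Prop :=
  Γ.IsCycle W ∧ W.sgn = -1

/-- A nontrivial walk that is a simple path (all visited vertices distinct). -/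
def IsPathWalk (Γ : SGraph V E) {u v : V} (P : Γ.Walk u v) : Prop :=
  P.edges ≠ [] ∧ P.verts.Nodup

/-- A tight handcuff at `v`: two edge-disjoint unbalanced cycles sharing exactly
the vertex `v`. -/
def IsTightHandcuff (Γ : SGraph V E) {v : V} (C₁ C₂ : Γ.Walk v v) : Prop :=
  Γ.IsUnbalancedCycle C₁ ∧ Γ.IsUnbalancedCycle C₂ ∧
    (∀ x ∈ C₁.srcs, x ∈ C₂.srcs → x = v) ∧ ∀ e ∈ C₁.edges, e ∉ C₂.edges

/-- A loose handcuff: two vertex-disjoint unbalanced cycles `C₁` (at `u`) and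
`C₂` (at `w`) joined by a simple path `P` from `u` to `w` meeting the cycles
exactly in its endpoints. -/
def IsLooseHandcuff (Γ : SGraph V E) {u w : V} (C₁ : Γ.Walk u u) (P : Γ.Walk u w)
    (C₂ : Γ.Walk w w) : Prop :=
  Γ.IsUnbalancedCycle C₁ ∧ Γ.IsUnbalancedCycle C₂ ∧ Γ.IsPathWalk P ∧
    (∀ x ∈ C₁.srcs, x ∉ C₂.srcs) ∧
    (∀ x ∈ P.verts, x ∈ C₁.srcs → x = u) ∧
    (∀ x ∈ P.verts, x ∈ C₂.srcs → x = w) ∧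
    ∀ e ∈ P.edges, e ∉ C₁.edges ∧ e ∉ C₂.edges

/-- The canonical closed walks traversing a circuit of the signed graph:
a balanced cycle, a tight handcuff `C₁ * C₂`, or a loose handcuff
`C₁ * P * C₂ * P⁻¹` (the circuit path edges being used twice). -/
def IsBasicCircuitWalk (Γ : SGraph V E) {v : V} (W : Γ.Walk v v) : Prop :=
  Γ.IsBalancedCycle W ∨
    (∃ C₁ C₂ : Γ.Walk v v, Γ.IsTightHandcuff C₁ C₂ ∧ W = C₁.append C₂) ∨
    ∃ (w : V) (C₁ : Γ.Walk v v) (P : Γ.Walk v w) (C₂ : Γ.Walk w w) (Q : Γ.Walk w v),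
      Γ.IsLooseHandcuff C₁ P C₂ ∧ Q.IsReverseOf P ∧
        W = C₁.append (P.append (C₂.append Q))

/-- A circuit walk: a rotation of a basic circuit walk. -/
def IsCircuitWalk (Γ : SGraph V E) {v : V} (W : Γ.Walk v v) : Prop :=
  ∃ (u : V) (A : Γ.Walk u v) (B : Γ.Walk v u),
    W = B.append A ∧ Γ.IsBasicCircuitWalk (A.append B)

/-- `e` is a circuit path edge: it lies on the connecting path of an unbalanced
loose handcuff. -/
def IsCircuitPathEdge (Γ : SGraph V E) (e : E) : Prop :=
  ∃ (u w : V) (C₁ : Γ.Walk u u) (P : Γ.Walk u w) (C₂ : Γ.Walk w w),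
    Γ.IsLooseHandcuff C₁ P C₂ ∧ e ∈ P.edges

/-- Adjacency via an edge. -/
def Adj (Γ : SGraph V E) (a b : V) : Prop := ∃ e, Γ.ends e = (a, b) ∨ Γ.ends e = (b, a)

/-- The set of connected components. -/
def Components (Γ : SGraph V E) : Type _ := Quot Γ.Adj

/-- The connected component of a vertex. -/
def comp (Γ : SGraph V E) (v : V) : Γ.Components := Quot.mk _ v

/-- The number `k(Γ)` of connected components. -/
def kAll (Γ : SGraph V E) : ℕ := Nat.card Γ.Components

/-- A connected component is balanced if every cycle it contains is balanced. -/
def IsBalancedComponent (Γ : SGraph V E) (c : Γ.Components) : Prop :=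
  ∀ v : V, Γ.comp v = c → ∀ W : Γ.Walk v v, Γ.IsCycle W → W.sgn = 1

/-- The number `k_b(Σ)` of balanced connected components. -/
def kb (Γ : SGraph V E) : ℕ := Nat.card {c : Γ.Components // Γ.IsBalancedComponent c}

/-- The number `k_u(Σ)` of unbalanced connected components. -/
def ku (Γ : SGraph V E) : ℕ := Nat.card {c : Γ.Components // ¬ Γ.IsBalancedComponent c}

/-- A signed graph is balanced if all its cycles are balanced. -/
def Balanced (Γ : SGraph V E) : Prop :=
  ∀ (v : V) (W : Γ.Walk v v), Γ.IsCycle W → W.sgn = 1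

/-- A signed graph is connected if it has exactly one connected component. -/
def Connected (Γ : SGraph V E) : Prop := Γ.kAll = 1

/-- The spanning subgraph `Σ \ Aᶜ` with edge set `A`. -/
def restrict (Γ : SGraph V E) (A : Set E) : SGraph V A :=
  { ends := fun e => Γ.ends e, sign := fun e => Γ.sign e }

/-- The signed Tutte polynomial (as a function of `x`, `y`, `z`):
`T_Σ(X,Y,Z) = Σ_{A⊆E} (X−1)^{k(Σ\Aᶜ)−k(Σ)} (Y−1)^{|A|−|V|+k_b(Σ\Aᶜ)} (Z−1)^{k_u(Σ\Aᶜ)}`. -/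
def signedTutte {K : Type*} [CommRing K] (Γ : SGraph V E) (x y z : K) : K :=
  ∑ᶠ A : Finset E,
    (x - 1) ^ ((Γ.restrict (A : Set E)).kAll - Γ.kAll) *
      (y - 1) ^ ((A.card + (Γ.restrict (A : Set E)).kb) - Nat.card V) *
        (z - 1) ^ (Γ.restrict (A : Set E)).ku

/-- Deletion of an edge. -/
def deleteEdge (Γ : SGraph V E) (e : E) : SGraph V {e' : E // e' ≠ e} :=
  { ends := fun e' => Γ.ends e'.1, sign := fun e' => Γ.sign e'.1 }

/-- The relation identifying the two endpoints of `e`. -/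
def contractRel (Γ : SGraph V E) (e : E) (a b : V) : Prop := (a, b) = Γ.ends e

/-- Contraction of an edge: the two endpoints are identified and the edge is
deleted.  (For a loop this is just deletion, as the identification is trivial.) -/
def contract (Γ : SGraph V E) (e : E) : SGraph (Quot (Γ.contractRel e)) {e' : E // e' ≠ e} :=
  { ends := fun e' => (Quot.mk _ (Γ.ends e'.1).1, Quot.mk _ (Γ.ends e'.1).2),
    sign := fun e' => Γ.sign e'.1 }

/-- `e` is a bridge: its deletion increases the number of connected components. -/
def IsBridge (Γ : SGraph V E) (e : E) : Prop := Γ.kAll < (Γ.deleteEdge e).kAll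

/-- An orientation of the half-edges, compatible with the signature. -/
def IsCompatible (Γ : SGraph V E) (ω : E → Bool → ℤˣ) : Prop :=
  ∀ e, Γ.sign e = -(ω e true * ω e false)

/-- A `G`-flow: Kirchhoff's law holds at every vertex. -/
def IsFlow (Γ : SGraph V E) (ω : E → Bool → ℤˣ) {G : Type*} [AddCommGroup G]
    (f : E → G) : Prop :=
  ∀ v : V,
    (∑ᶠ e : E, ((if Γ.endpt e true = v then (ω e true : ℤ) • f e else 0) +
      (if Γ.endpt e false = v then (ω e false : ℤ) • f e else 0))) = 0

/-- A `G`-tension: the alternating sum along every circuit walk vanishes. -/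
def IsTension (Γ : SGraph V E) (ω : E → Bool → ℤˣ) {G : Type*} [AddCommGroup G]
    (f : E → G) : Prop :=
  ∀ (v : V) (W : Γ.Walk v v), Γ.IsCircuitWalk W → W.tensionSum ω f = 0

end SGraph

/-- The doubling homomorphism `x ↦ x + x = 2x` of an abelian group. -/
def doubleHom (G : Type*) [AddCommGroup G] : G →+ G :=
  AddMonoidHom.mk' (fun x => x + x) (fun a b => add_add_add_comm a b a b)

/-- The subgroup `2G = {2x : x ∈ G}`. -/
def twoG (G : Type*) [AddCommGroup G] : AddSubgroup G := (doubleHom G).range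

/-- The `2`-torsion subgroup `G₂ = {x ∈ G : 2x = 0}`. -/
def torsion2 (G : Type*) [AddCommGroup G] : AddSubgroup G := (doubleHom G).ker

namespace SGraph

variable {V E : Type*}

/-- A `G`-potential difference: a `G`-tension whose sum around every unbalanced
cycle lies in `2G`. -/
def IsPotentialDifference (Γ : SGraph V E) (ω : E → Bool → ℤˣ) {G : Type*} [AddCommGroup G]
    (f : E → G) : Prop :=
  Γ.IsTension ω f ∧
    ∀ (v : V) (W : Γ.Walk v v), Γ.IsUnbalancedCycle W → W.edgeSum f ∈ twoG G

end SGraph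

namespace SGraph

variable {V E : Type*}

/-- Proper coloring by elements of a set `X` with involution `ι`: adjacent
endpoints of a positive edge get different colors, and for a negative edge the
`ι`-image of one endpoint's color differs from the other endpoint's color. -/
def IsProperInvColoring (Γ : SGraph V E) {X : Type*} (ι : X → X) (f : V → X) : Prop :=
  ∀ e : E, (Γ.sign e = 1 → f ((Γ.ends e).1) ≠ f ((Γ.ends e).2)) ∧
    (Γ.sign e = -1 → ι (f ((Γ.ends e).1)) ≠ f ((Γ.ends e).2))

/-- A proper `G`-coloring: for every edge `e = uv`, `f(u) ≠ f(v)` if `e` is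
positive and `-f(u) ≠ f(v)` if `e` is negative, i.e. `σ(e)•f(u) ≠ f(v)`. -/
def IsProperColoring (Γ : SGraph V E) {G : Type*} [AddCommGroup G] (f : V → G) : Prop :=
  ∀ e : E, ((Γ.sign e : ℤ) • f ((Γ.ends e).1)) ≠ f ((Γ.ends e).2)

/-- Zaslavsky's proper `n`-coloring: colors in `{0, ±1, …, ±n}` with
`f(u) ≠ σ(e)·f(v)` for every edge `e = uv`. -/
def IsProperNColoring (Γ : SGraph V E) (n : ℕ) (f : V → ℤ) : Prop :=
  (∀ v, |f v| ≤ (n : ℤ)) ∧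
    ∀ e : E, f ((Γ.ends e).1) ≠ (Γ.sign e : ℤ) * f ((Γ.ends e).2)

/-- `T ⊆ E` is a spanning tree: the spanning subgraph `(V,T)` is connected and
contains no cycle. -/
def IsSpanningTree (Γ : SGraph V E) (T : Set E) : Prop :=
  (Γ.restrict T).Connected ∧
    ∀ (v : V) (W : (Γ.restrict T).Walk v v), ¬ (Γ.restrict T).IsCycle W

/-- A connected basis of a connected signed graph: a spanning tree if `Σ` is
balanced; otherwise a spanning tree plus one extra edge closing an unbalanced
cycle. -/
def IsConnectedBasis (Γ : SGraph V E) (B : Set E) : Prop :=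
  (Γ.Balanced ∧ Γ.IsSpanningTree B) ∨
    (¬ Γ.Balanced ∧ ∃ (T : Set E) (e : E), Γ.IsSpanningTree T ∧ e ∉ T ∧ B = insert e T ∧
      ∀ (v : V) (W : (Γ.restrict B).Walk v v), (Γ.restrict B).IsCycle W → W.sgn = -1)

/-- Switching at a vertex `v`: the sign of every non-loop edge incident with `v`
is negated; loops keep their sign. -/
def switchAt (Γ : SGraph V E) (v : V) : SGraph V E :=
  { ends := Γ.ends,
    sign := fun e => if ((Γ.ends e).1 = v ↔ (Γ.ends e).2 = v) then Γ.sign e else -Γ.sign e }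

/-- Switching at a set `S` of vertices (the composite of the switchings at the
vertices of `S`): the sign of an edge is negated iff exactly one of its
endpoints lies in `S`. -/
def switchSet (Γ : SGraph V E) (S : Set V) : SGraph V E :=
  { ends := Γ.ends,
    sign := fun e => if ((Γ.ends e).1 ∈ S ↔ (Γ.ends e).2 ∈ S) then Γ.sign e else -Γ.sign e }

/-- Isomorphism of signed graphs (as undirected signed multigraphs). -/
def Iso {V₁ E₁ V₂ E₂ : Type*} (Γ₁ : SGraph V₁ E₁) (Γ₂ : SGraph V₂ E₂) : Prop :=
  ∃ (φ : V₁ ≃ V₂) (ψ : E₁ ≃ E₂), ∀ e : E₁,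
    (Γ₂.ends (ψ e) = (φ (Γ₁.ends e).1, φ (Γ₁.ends e).2) ∨
      Γ₂.ends (ψ e) = (φ (Γ₁.ends e).2, φ (Γ₁.ends e).1)) ∧
    Γ₂.sign (ψ e) = Γ₁.sign e

/-- Switching equivalence: isomorphism after switching at a set of vertices. -/
def SwitchEquiv {V₁ E₁ V₂ E₂ : Type*} (Γ₁ : SGraph V₁ E₁) (Γ₂ : SGraph V₂ E₂) : Prop :=
  ∃ S : Set V₁, Iso (Γ₁.switchSet S) Γ₂

/-- Disjoint union of signed graphs. -/
def disjUnion {V₁ E₁ V₂ E₂ : Type*} (Γ₁ : SGraph V₁ E₁) (Γ₂ : SGraph V₂ E₂) :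
    SGraph (V₁ ⊕ V₂) (E₁ ⊕ E₂) where
  ends := fun e => match e with
    | .inl e => (Sum.inl (Γ₁.ends e).1, Sum.inl (Γ₁.ends e).2)
    | .inr e => (Sum.inr (Γ₂.ends e).1, Sum.inr (Γ₂.ends e).2)
  sign := fun e => match e with
    | .inl e => Γ₁.sign e
    | .inr e => Γ₂.sign e

/-- The difference operator `δ : G^V → G^E`,
`(δg)(e) = ω(v,e)·g(v) + ω(u,e)·g(u)` for `e = uv`. -/
def deltaHom (Γ : SGraph V E) (ω : E → Bool → ℤˣ) (G : Type*) [AddCommGroup G] :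
    (V → G) →+ (E → G) :=
  AddMonoidHom.mk'
    (fun g e => (ω e true : ℤ) • g ((Γ.ends e).1) + (ω e false : ℤ) • g ((Γ.ends e).2))
    (by
      intro a b
      funext e
      simp only [Pi.add_apply, smul_add]
      abel)

end SGraph

end SignedGraphs

/-!
Along a walk `W` from `u` to `v`, the weighted sum of `δg` telescopes to `g u - σ(W) • g v`.
Circuit walks are closed and positive, so `δg` is a tension, and `δg = 0` exactly when
`g u = σ(W) • g v` for every walk. A kernel element is therefore determined by its values at
one vertex `r` per component, and the possible values at `r` are those fixed by the signs of
all closed walks at `r`: all of `G` if the component is balanced, and `G₂` otherwise, since a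
negative closed walk contains a negative cycle.
-/

theorem List.exists_eq_append_cons_append_cons_of_not_nodup {α : Type*} {l : List α}
    (h : ¬ l.Nodup) : ∃ (a : α) (l₁ l₂ l₃ : List α), l = l₁ ++ a :: (l₂ ++ a :: l₃) := by
  obtain ⟨a, ha⟩ : ∃ a, List.Sublist [a, a] l := by simpa [List.nodup_iff_sublist] using h
  obtain ⟨r₁, r₂, rfl, h₁, h₂⟩ := List.cons_sublist_iff.mp ha
  obtain ⟨l₁, t, rfl⟩ := List.append_of_mem h₁
  obtain ⟨s, l₃, rfl⟩ := List.append_of_mem (List.singleton_sublist.mp h₂)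
  exact ⟨a, l₁, t ++ s, l₃, by simp⟩

theorem Int.units_zsmul_zsmul_self {G : Type*} [AddCommGroup G] (a : ℤˣ) (x : G) :
    (a : ℤ) • (a : ℤ) • x = x := by
  rw [smul_smul, ← Units.val_mul, Int.units_mul_self, Units.val_one, one_smul]

namespace SGraph

variable {V E : Type*} {Γ : SGraph V E}

namespace Walk

@[simp] theorem edges_cons (e : E) (d : Bool) {w : V} (p : Γ.Walk (Γ.endpt e (!d)) w) :
    (cons e d p).edges = e :: p.edges := rfl

@[simp] theorem sgn_cons (e : E) (d : Bool) {w : V} (p : Γ.Walk (Γ.endpt e (!d)) w) :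
    (cons e d p).sgn = Γ.sign e * p.sgn := rfl

@[simp] theorem srcs_nil (v : V) : (nil (Γ := Γ) v).srcs = [] := rfl

theorem verts_ne_nil {u v : V} (W : Γ.Walk u v) : W.verts ≠ [] := by
  cases W <;> simp [verts]

@[simp] theorem srcs_cons (e : E) (d : Bool) {w : V} (p : Γ.Walk (Γ.endpt e (!d)) w) :
    (cons e d p).srcs = Γ.endpt e d :: p.srcs :=
  List.dropLast_cons_of_ne_nil p.verts_ne_nil

@[simp] theorem cons_append (e : E) (d : Bool) {x w : V} (p : Γ.Walk (Γ.endpt e (!d)) x)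
    (q : Γ.Walk x w) : (cons e d p).append q = cons e d (p.append q) := rfl

@[simp] theorem nil_append {v w : V} (q : Γ.Walk v w) : (nil v).append q = q := rfl

@[simp] theorem edges_append {u v w : V} (p : Γ.Walk u v) (q : Γ.Walk v w) :
    (p.append q).edges = p.edges ++ q.edges := by
  induction p with
  | nil => rfl
  | cons e d p ih => simp [ih]

@[simp] theorem srcs_append {u v w : V} (p : Γ.Walk u v) (q : Γ.Walk v w) :
    (p.append q).srcs = p.srcs ++ q.srcs := by
  induction p with
  | nil => rfl
  | cons e d p ih => simp [ih]

@[simp] theorem sgn_append {u v w : V} (p : Γ.Walk u v) (q : Γ.Walk v w) :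
    (p.append q).sgn = p.sgn * q.sgn := by
  induction p with
  | nil => simp [sgn]
  | cons e d p ih => simp [ih, mul_assoc]

theorem length_srcs {u v : V} (W : Γ.Walk u v) : W.srcs.length = W.edges.length := by
  induction W with
  | nil => rfl
  | cons e d p ih => simp [ih]

theorem sgn_eq_prod {u v : V} (W : Γ.Walk u v) : W.sgn = (W.edges.map Γ.sign).prod := by
  induction W with
  | nil => rfl
  | cons e d p ih => simp [ih]

theorem eq_of_edges_eq_nil {u v : V} (W : Γ.Walk u v) (h : W.edges = []) : u = v := by
  cases W with
  | nil => rfl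
  | cons => simp at h

theorem sgn_eq_one_of_edges_eq_nil {u v : V} (W : Γ.Walk u v) (h : W.edges = []) :
    W.sgn = 1 := by
  rw [sgn_eq_prod, h]; rfl

theorem edges_eq_nil_of_not_mem_srcs {u v : V} (W : Γ.Walk u v) (h : u ∉ W.srcs) :
    W.edges = [] := by
  cases W with
  | nil => rfl
  | cons => simp at h

theorem edges_eq_map_steps {u v : V} (W : Γ.Walk u v) : W.edges = W.steps.map Prod.fst := by
  induction W with
  | nil => rfl
  | cons e d p ih => simp [ih, steps]

theorem sgn_eq_of_isReverseOf {u v : V} {P : Γ.Walk u v} {Q : Γ.Walk v u}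
    (h : Q.IsReverseOf P) : Q.sgn = P.sgn := by
  have hrev : Q.edges = P.edges.reverse := by
    rw [edges_eq_map_steps, edges_eq_map_steps, show Q.steps = _ from h]
    simp [List.map_reverse, Function.comp_def]
  simp [sgn_eq_prod, hrev, List.map_reverse, List.prod_reverse]

theorem exists_eq_append_of_srcs_eq {u v : V} (W : Γ.Walk u v) {l₁ l₂ : List V} {w : V}
    (h : W.srcs = l₁ ++ w :: l₂) : ∃ (A : Γ.Walk u w) (B : Γ.Walk w v),
      W = A.append B ∧ A.srcs = l₁ ∧ B.srcs = w :: l₂ := by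
  induction W generalizing l₁ with
  | nil => simp at h
  | cons e d p ih =>
    rw [srcs_cons] at h
    cases l₁ with
    | nil =>
      obtain ⟨rfl, hp⟩ := List.cons_eq_cons.mp h
      exact ⟨nil _, cons e d p, rfl, rfl, by rw [srcs_cons, hp]⟩
    | cons x t =>
      obtain ⟨rfl, hp⟩ := List.cons_eq_cons.mp h
      obtain ⟨A, B, rfl, hA, hB⟩ := ih hp
      exact ⟨cons e d A, B, rfl, by rw [srcs_cons, hA], hB⟩

theorem exists_eq_append_cons_of_edges_eq {u v : V} (W : Γ.Walk u v) {L₁ L₂ : List E} {e : E}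
    (h : W.edges = L₁ ++ e :: L₂) : ∃ (d : Bool) (A : Γ.Walk u (Γ.endpt e d))
      (B : Γ.Walk (Γ.endpt e (!d)) v),
      W = A.append (cons e d B) ∧ A.edges = L₁ ∧ B.edges = L₂ := by
  induction W generalizing L₁ with
  | nil => simp [edges] at h
  | cons e' d p ih =>
    rw [edges_cons] at h
    cases L₁ with
    | nil =>
      obtain ⟨rfl, hp⟩ := List.cons_eq_cons.mp h
      exact ⟨d, nil _, p, rfl, rfl, hp⟩
    | cons x t =>
      obtain ⟨rfl, hp⟩ := List.cons_eq_cons.mp h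
      obtain ⟨d', A, B, rfl, hA, hB⟩ := ih hp
      exact ⟨d', cons e' d A, B, rfl, by rw [edges_cons, hA], hB⟩

theorem exists_reverse_sgn_eq {u v : V} (W : Γ.Walk u v) :
    ∃ W' : Γ.Walk v u, W'.sgn = W.sgn := by
  induction W with
  | nil v => exact ⟨nil v, rfl⟩
  | cons e d p ih =>
    obtain ⟨p', hp'⟩ := ih
    have back : ∃ s : Γ.Walk (Γ.endpt e (!d)) (Γ.endpt e d), s.sgn = Γ.sign e := by
      cases d
      · exact ⟨cons e true (nil _), mul_one _⟩
      · exact ⟨cons e false (nil _), mul_one _⟩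
    obtain ⟨s, hs⟩ := back
    exact ⟨p'.append s, by simp [hp', hs, mul_comm]⟩

theorem tensionSum_zero {G : Type*} [AddCommGroup G] {ω : E → Bool → ℤˣ} {u v : V}
    (W : Γ.Walk u v) : W.tensionSum ω (0 : E → G) = 0 := by
  induction W with
  | nil => rfl
  | cons e d p ih => simp [tensionSum, ih]

end Walk

open Walk

theorem comp_eq_of_walk {u v : V} (W : Γ.Walk u v) : Γ.comp u = Γ.comp v := by
  induction W with
  | nil => rfl
  | cons e d p ih =>
    refine Eq.trans ?_ ih
    have h : Γ.comp (Γ.ends e).1 = Γ.comp (Γ.ends e).2 := Quot.sound ⟨e, Or.inl rfl⟩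
    cases d
    · exact h.symm
    · exact h

theorem nonempty_walk_of_comp_eq {u v : V} (h : Γ.comp u = Γ.comp v) :
    Nonempty (Γ.Walk u v) := by
  have h' : Relation.EqvGen Γ.Adj u v := Quot.eq.mp h
  clear h
  induction h' with
  | rel a b hab =>
    obtain ⟨e, he | he⟩ := hab
    · obtain ⟨rfl, rfl⟩ := Prod.ext_iff.mp he
      exact ⟨cons e true (nil _)⟩
    · obtain ⟨rfl, rfl⟩ := Prod.ext_iff.mp he
      exact ⟨cons e false (nil _)⟩
  | refl a => exact ⟨nil a⟩
  | symm a b _ ih => exact ⟨(exists_reverse_sgn_eq ih.some).choose⟩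
  | trans a b c _ _ ih₁ ih₂ => exact ⟨ih₁.some.append ih₂.some⟩

theorem comp_out (c : Γ.Components) : Γ.comp (Quot.out c) = c := Quot.out_eq c

theorem edges_nodup_of_srcs_nodup {u : V} (W : Γ.Walk u u) (hs : W.srcs.Nodup)
    (hW : W.sgn = -1) : W.edges.Nodup := by
  -- With distinct sources, a repeated edge can only be traversed forth and back, and that
  -- closed walk is positive.
  by_contra hdup
  obtain ⟨e, L₁, L₂, L₃, hL⟩ := List.exists_eq_append_cons_append_cons_of_not_nodup hdup
  obtain ⟨d, A, B, rfl, -, hB⟩ := exists_eq_append_cons_of_edges_eq W hL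
  obtain ⟨d', A', B', rfl, -, -⟩ := exists_eq_append_cons_of_edges_eq B hB
  simp only [srcs_append, srcs_cons, List.nodup_append, List.nodup_cons, List.mem_append,
    List.mem_cons] at hs
  obtain ⟨-, ⟨hx, -, -, hy⟩, hA⟩ := hs
  simp only [not_or] at hx
  obtain ⟨-, hxy, hxB'⟩ := hx
  have hd' : d' = !d := by
    cases d <;> cases d' <;> first | rfl | exact absurd rfl hxy
  have hA'nil : A'.edges = [] :=
    edges_eq_nil_of_not_mem_srcs A' fun h => hy _ h _ (Or.inl (by rw [hd'])) rfl
  have hstart : Γ.endpt e (!d') = Γ.endpt e d := by rw [hd', Bool.not_not]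
  have hB'nil : B'.edges = [] := edges_eq_nil_of_not_mem_srcs B' (by convert hxB' using 2)
  have hu : u = Γ.endpt e d := (eq_of_edges_eq_nil B' hB'nil).symm.trans hstart
  have hAnil : A.edges = [] :=
    edges_eq_nil_of_not_mem_srcs A fun h => hA _ h _ (Or.inl rfl) hu
  simp only [sgn_append, sgn_cons, sgn_eq_one_of_edges_eq_nil _ hAnil,
    sgn_eq_one_of_edges_eq_nil _ hA'nil, sgn_eq_one_of_edges_eq_nil _ hB'nil, one_mul,
    mul_one, Int.units_mul_self] at hW
  exact absurd hW (by decide)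

theorem exists_isCycle_sgn_eq_neg_one {u : V} (W : Γ.Walk u u) (hW : W.sgn = -1) :
    ∃ (w : V) (C : Γ.Walk w w), Γ.IsCycle C ∧ C.sgn = -1 ∧ Γ.comp w = Γ.comp u := by
  induction hn : W.edges.length using Nat.strong_induction_on generalizing u with
  | _ n ih =>
  by_cases hs : W.srcs.Nodup
  · refine ⟨u, W, ⟨fun h => ?_, hs, edges_nodup_of_srcs_nodup W hs hW⟩, hW, rfl⟩
    exact absurd (hW.symm.trans (sgn_eq_one_of_edges_eq_nil W h)) (by decide)
  -- A repeated source splits `W` as `A C D` with `C` closed; one of `C` and `A D` is negative.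
  obtain ⟨w, l₁, l₂, l₃, hl⟩ := List.exists_eq_append_cons_append_cons_of_not_nodup hs
  obtain ⟨A, B, rfl, -, hB⟩ := exists_eq_append_of_srcs_eq W hl
  obtain ⟨C, D, rfl, hC, hD⟩ := exists_eq_append_of_srcs_eq B (l₁ := w :: l₂) hB
  have hClen := congrArg List.length hC
  have hDlen := congrArg List.length hD
  simp only [length_srcs, List.length_cons] at hClen hDlen
  simp only [edges_append, List.length_append] at hn
  rw [sgn_append, sgn_append] at hW
  rcases Int.units_eq_one_or C.sgn with hCsgn | hCsgn
  · refine ih _ ?_ (A.append D) (by simpa [hCsgn] using hW) rfl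
    simp only [edges_append, List.length_append]
    omega
  · obtain ⟨w', C', hC', hsgn, hcomp⟩ := ih _ (by omega) C hCsgn rfl
    exact ⟨w', C', hC', hsgn, hcomp.trans (comp_eq_of_walk A).symm⟩

theorem sgn_eq_one_of_isBalancedComponent {u : V} (hu : Γ.IsBalancedComponent (Γ.comp u))
    (W : Γ.Walk u u) : W.sgn = 1 := by
  refine (Int.units_eq_one_or W.sgn).resolve_right fun hW => ?_
  obtain ⟨w, C, hC, hsgn, hcomp⟩ := exists_isCycle_sgn_eq_neg_one W hW
  exact absurd (hsgn.symm.trans (hu w hcomp C hC)) (by decide)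

variable {G : Type*} [AddCommGroup G] {ω : E → Bool → ℤˣ}

theorem smul_deltaHom_apply (hω : Γ.IsCompatible ω) (g : V → G) (e : E) (d : Bool) :
    (ω e d : ℤ) • Γ.deltaHom ω G g e
      = g (Γ.endpt e d) - (Γ.sign e : ℤ) • g (Γ.endpt e (!d)) := by
  have hσ := hω e
  rcases Int.units_eq_one_or (ω e true) with h1 | h1 <;>
    rcases Int.units_eq_one_or (ω e false) with h2 | h2 <;>
      cases d <;> simp [deltaHom, hσ, h1, h2, endpt, sub_eq_add_neg, add_comm]

theorem tensionSum_deltaHom (hω : Γ.IsCompatible ω) (g : V → G) {u v : V} (W : Γ.Walk u v) :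
    W.tensionSum ω (Γ.deltaHom ω G g) = g u - (W.sgn : ℤ) • g v := by
  induction W with
  | nil => simp [tensionSum, sgn]
  | cons e d p ih =>
    rw [tensionSum, ih, smul_deltaHom_apply hω, sgn_cons]
    simp only [Units.val_mul, smul_sub, smul_smul]
    abel

theorem sgn_eq_one_of_isBasicCircuitWalk {v : V} {W : Γ.Walk v v}
    (h : Γ.IsBasicCircuitWalk W) : W.sgn = 1 := by
  rcases h with hb | ⟨C₁, C₂, ⟨h₁, h₂, -⟩, rfl⟩ | ⟨w, C₁, P, C₂, Q, ⟨h₁, h₂, -⟩, hQ, rfl⟩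
  · exact hb.2
  · simp [h₁.2, h₂.2]
  · simp only [sgn_append, h₁.2, h₂.2, sgn_eq_of_isReverseOf hQ]
    rcases Int.units_eq_one_or P.sgn with h | h <;> simp [h]

theorem sgn_eq_one_of_isCircuitWalk {v : V} {W : Γ.Walk v v} (h : Γ.IsCircuitWalk W) :
    W.sgn = 1 := by
  obtain ⟨u, A, B, rfl, hW⟩ := h
  simpa [mul_comm] using sgn_eq_one_of_isBasicCircuitWalk hW

theorem isTension_deltaHom (hω : Γ.IsCompatible ω) (g : V → G) :
    Γ.IsTension ω (Γ.deltaHom ω G g) := fun v W hW => by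
  simp [tensionSum_deltaHom hω g W, sgn_eq_one_of_isCircuitWalk hW]

theorem deltaHom_eq_zero_iff (hω : Γ.IsCompatible ω) {g : V → G} :
    Γ.deltaHom ω G g = 0 ↔ ∀ {u v : V} (W : Γ.Walk u v), g u = (W.sgn : ℤ) • g v := by
  refine ⟨fun h u v W => ?_, fun h => funext fun e => ?_⟩
  · have hW := tensionSum_deltaHom hω g W
    rw [h, tensionSum_zero] at hW
    exact sub_eq_zero.mp hW.symm
  · have hstep := smul_deltaHom_apply hω g e true
    have he := h (cons e true (nil _))
    rw [sgn_cons, sgn, mul_one] at he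
    rw [he, sub_self] at hstep
    rw [Pi.zero_apply, ← Int.units_zsmul_zsmul_self (ω e true) (Γ.deltaHom ω G g e), hstep,
      smul_zero]

variable (Γ G) in
def closedWalkFixed (u : V) : AddSubgroup G where
  carrier := {x | ∀ W : Γ.Walk u u, (W.sgn : ℤ) • x = x}
  add_mem' hx hy W := by simp [smul_add, hx W, hy W]
  zero_mem' _ := smul_zero _
  neg_mem' hx W := by simp [smul_neg, hx W]

theorem closedWalkFixed_eq_top {u : V} (hu : Γ.IsBalancedComponent (Γ.comp u)) :
    Γ.closedWalkFixed G u = ⊤ :=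
  eq_top_iff.mpr fun x _ W => by simp [sgn_eq_one_of_isBalancedComponent hu W]

theorem closedWalkFixed_eq_torsion2 {u : V} (hu : ¬ Γ.IsBalancedComponent (Γ.comp u)) :
    Γ.closedWalkFixed G u = torsion2 G := by
  ext x
  change (∀ W : Γ.Walk u u, (W.sgn : ℤ) • x = x) ↔ x + x = 0
  constructor
  · intro hx
    simp only [IsBalancedComponent, not_forall] at hu
    obtain ⟨v, hv, C, hC, hCsgn⟩ := hu
    obtain ⟨P⟩ := nonempty_walk_of_comp_eq hv.symm
    obtain ⟨P', hP'⟩ := exists_reverse_sgn_eq P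
    have hneg := hx (P.append (C.append P'))
    rw [sgn_append, sgn_append, hP', (Int.units_eq_one_or C.sgn).resolve_left hCsgn,
      neg_one_mul, mul_neg, Int.units_mul_self] at hneg
    simpa [neg_eq_iff_add_eq_zero] using hneg
  · intro hx W
    rcases Int.units_eq_one_or W.sgn with h | h <;>
      simp [h, neg_eq_of_add_eq_zero_left hx]

theorem smul_eq_smul_of_mem_closedWalkFixed {u v : V} {x : G}
    (hx : x ∈ Γ.closedWalkFixed G u) (A B : Γ.Walk u v) :
    (A.sgn : ℤ) • x = (B.sgn : ℤ) • x := by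
  obtain ⟨B', hB'⟩ := exists_reverse_sgn_eq B
  have h := hx (A.append B')
  rw [sgn_append, hB', Units.val_mul, mul_smul] at h
  conv_lhs => rw [← h]
  rw [Int.units_zsmul_zsmul_self]

noncomputable def extendFromOut (x : ∀ c : Γ.Components, Γ.closedWalkFixed G (Quot.out c))
    (v : V) : G :=
  ((nonempty_walk_of_comp_eq (comp_out (Γ.comp v))).some.sgn : ℤ) • x (Γ.comp v)

theorem extendFromOut_eq (x : ∀ c : Γ.Components, Γ.closedWalkFixed G (Quot.out c))
    {c : Γ.Components} {v : V} (hv : Γ.comp v = c) (A : Γ.Walk (Quot.out c) v) :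
    extendFromOut x v = (A.sgn : ℤ) • x c := by
  subst hv
  exact smul_eq_smul_of_mem_closedWalkFixed (x _).2 _ A

theorem extendFromOut_out (x : ∀ c : Γ.Components, Γ.closedWalkFixed G (Quot.out c))
    (c : Γ.Components) : extendFromOut x (Quot.out c) = x c := by
  simpa [sgn] using extendFromOut_eq x (comp_out c) (nil _)

theorem deltaHom_extendFromOut (hω : Γ.IsCompatible ω)
    (x : ∀ c : Γ.Components, Γ.closedWalkFixed G (Quot.out c)) :
    Γ.deltaHom ω G (extendFromOut x) = 0 := by
  refine (deltaHom_eq_zero_iff hω).mpr fun {u v} W => ?_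
  obtain ⟨A⟩ := nonempty_walk_of_comp_eq (comp_out (Γ.comp v))
  obtain ⟨W', hW'⟩ := exists_reverse_sgn_eq W
  rw [extendFromOut_eq x rfl A,
    extendFromOut_eq x (comp_eq_of_walk W) (A.append W'), sgn_append, hW', Units.val_mul,
    mul_comm, mul_smul]

noncomputable def kerDeltaHomEquiv (hω : Γ.IsCompatible ω) :
    (Γ.deltaHom ω G).ker ≃+ ∀ c : Γ.Components, Γ.closedWalkFixed G (Quot.out c) where
  toFun g c := ⟨g.1 (Quot.out c), fun W => ((deltaHom_eq_zero_iff hω).mp g.2 W).symm⟩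
  invFun x := ⟨extendFromOut x, deltaHom_extendFromOut hω x⟩
  left_inv g := Subtype.ext <| funext fun v => by
    obtain ⟨A⟩ := nonempty_walk_of_comp_eq (comp_out (Γ.comp v))
    dsimp only
    refine (extendFromOut_eq _ rfl A).trans ?_
    change (A.sgn : ℤ) • g.1 (Quot.out (Γ.comp v)) = g.1 v
    rw [(deltaHom_eq_zero_iff hω).mp g.2 A, Int.units_zsmul_zsmul_self]
  right_inv x := funext fun c => Subtype.ext (extendFromOut_out x c)
  map_add' _ _ := rfl

variable (Γ G) in
noncomputable def piClosedWalkFixedEquiv :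
    (∀ c : Γ.Components, Γ.closedWalkFixed G (Quot.out c)) ≃+
      ({c : Γ.Components // Γ.IsBalancedComponent c} → G) ×
        ({c : Γ.Components // ¬ Γ.IsBalancedComponent c} → torsion2 G) :=
  (AddEquiv.mk (Equiv.piEquivPiSubtypeProd Γ.IsBalancedComponent _) fun _ _ => rfl).trans
    (AddEquiv.prodCongr
      (AddEquiv.piCongrRight fun c => (AddEquiv.addSubgroupCongr
        (closedWalkFixed_eq_top ((comp_out c.1).symm ▸ c.2))).trans AddSubgroup.topEquiv)
      (AddEquiv.piCongrRight fun c => AddEquiv.addSubgroupCongr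
        (closedWalkFixed_eq_torsion2 ((comp_out c.1).symm ▸ c.2))))

end SGraph

section Statement

open SGraph

theorem deltaHom_image_tensions_and_kernel_general (V E : Type) [Finite V]
    (Γ : SGraph V E) (ω : E → Bool → ℤˣ) (hω : Γ.IsCompatible ω)
    (G : Type) [AddCommGroup G] :
    -- δ is a group homomorphism
    (∀ g h : V → G, Γ.deltaHom ω G (g + h) = Γ.deltaHom ω G g + Γ.deltaHom ω G h) ∧
    -- its image is contained in the group of G-tensions
    (∀ g : V → G, Γ.IsTension ω (Γ.deltaHom ω G g)) ∧
    -- its kernel is isomorphic to G^{k_b} × G₂^{k_u}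
    Nonempty ((Γ.deltaHom ω G).ker ≃+ ((Fin Γ.kb → G) × (Fin Γ.ku → torsion2 G))) := by
  refine ⟨fun g h => map_add _ g h, isTension_deltaHom hω, ⟨?_⟩⟩
  have : Finite Γ.Components := Finite.of_surjective Γ.comp Quot.exists_rep
  exact (kerDeltaHomEquiv hω).trans <| (piClosedWalkFixedEquiv Γ G).trans <|
    (AddEquiv.arrowCongr (Finite.equivFin _) (.refl _)).prodCongr
      (AddEquiv.arrowCongr (Finite.equivFin _) (.refl _))

/-- Theorem 7.13: the difference operator `δ : G^V → G^E` is a group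
homomorphism whose image consists of `G`-tensions, and whose kernel is
isomorphic to `G^{k_b(Σ)} × G₂^{k_u(Σ)}`, where `G₂ = {x ∈ G : 2x = 0}`. -/
theorem deltaHom_image_tensions_and_kernel (V E : Type) [Finite V] [Finite E]
    (Γ : SGraph V E) (ω : E → Bool → ℤˣ) (hω : Γ.IsCompatible ω)
    (G : Type) [AddCommGroup G] [Finite G] :
    -- δ is a group homomorphism
    (∀ g h : V → G, Γ.deltaHom ω G (g + h) = Γ.deltaHom ω G g + Γ.deltaHom ω G h) ∧
    -- its image is contained in the group of G-tensions
    (∀ g : V → G, Γ.IsTension ω (Γ.deltaHom ω G g)) ∧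
    -- its kernel is isomorphic to G^{k_b} × G₂^{k_u}
    Nonempty ((Γ.deltaHom ω G).ker ≃+ ((Fin Γ.kb → G) × (Fin Γ.ku → torsion2 G))) :=
  deltaHom_image_tensions_and_kernel_general V E Γ ω hω G

end Statement
end

section
/- Let M₁=(E,r₁) and M₂=(E,r₂) be matroids on a common finite ground set E, with duals M₁*=(E,r₁*) and M₂*=(E,r₂*). Then, as an identity of field-valued functions, for all X, Y, Z with X ≠ 1, Y ≠ 1 and Z ≠ 1: S_{M₁*,M₂*}(X, Y, Z) = (X−1)^{−r₁(E)} · (Y−1)^{r₂(E)} · (Z−1)^{|E|−r₁(E)−r₂(E)} · S_{M₁,M₂}(Y, X, 1 + (X−1)(Z−1)/(Y−1)). -/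
noncomputable section Matroids

/-- A matroid on a finite ground set `E`, presented by its rank function. -/
structure RankMatroid (E : Type*) [Fintype E] [DecidableEq E] where
  r : Finset E → ℕ
  rank_le_card : ∀ A : Finset E, r A ≤ A.card
  rank_mono : ∀ ⦃A B : Finset E⦄, A ⊆ B → r A ≤ r B
  rank_submodular : ∀ A B : Finset E, r (A ∪ B) + r (A ∩ B) ≤ r A + r B

/-- The rank function of the dual matroid: `r*(A) = r(Aᶜ) + |A| − r(E)`. -/
def RankMatroid.dualRank {E : Type*} [Fintype E] [DecidableEq E] (M : RankMatroid E) :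
    Finset E → ℕ :=
  fun A => (M.r Aᶜ + A.card) - M.r Finset.univ

/-- The Tutte polynomial of a rank function:
`T(X,Y) = Σ_{A⊆E} (X−1)^{r(E)−r(A)} (Y−1)^{|A|−r(A)}`. -/
def tutteFn {E : Type*} [Fintype E] {K : Type*} [Field K]
    (r : Finset E → ℕ) (x y : K) : K :=
  ∑ A : Finset E, (x - 1) ^ (r Finset.univ - r A) * (y - 1) ^ (A.card - r A)

/-- The joint Tutte polynomial of an ordered pair of rank functions on a common
ground set: `S(X,Y,Z) = Σ_{A⊆E} (X−1)^{r₁(E)−r₁(A)} (Y−1)^{|A|−r₂(A)}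
(Z−1)^{r₂(A)+r₁(E)−r₁(A)}`. -/
def jointTutteFn {E : Type*} [Fintype E] {K : Type*} [Field K]
    (r₁ r₂ : Finset E → ℕ) (x y z : K) : K :=
  ∑ A : Finset E,
    (x - 1) ^ (r₁ Finset.univ - r₁ A) * (y - 1) ^ (A.card - r₂ A) *
      (z - 1) ^ ((r₂ A + r₁ Finset.univ) - r₁ A)

end Matroids

/-! Writing `r*(A) = r(Aᶜ) + |A| − r(E)` and summing over `B = Aᶜ` instead of `A`, every term of
`S_{M₁*,M₂*}(X,Y,Z)` becomes a monomial in `X−1, Y−1, Z−1` whose exponents are linear in `|B|`,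
`r₁(B)`, `r₂(B)`, and so does the `B`-term of the right-hand side. Once `X−1, Y−1, Z−1` are
invertible the exponents may be compared in `ℤ`, where they agree. -/

open Finset

namespace RankMatroid

variable {E : Type*} [Fintype E] [DecidableEq E] (M : RankMatroid E)

lemma rank_empty : M.r ∅ = 0 :=
  Nat.le_zero.mp (by simpa using M.rank_le_card ∅)

lemma rank_univ_le_rank_compl_add_card (A : Finset E) : M.r univ ≤ M.r Aᶜ + A.card := by
  have h := M.rank_submodular A Aᶜ
  rw [union_compl, inter_compl, rank_empty] at h
  linarith [M.rank_le_card A]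

lemma natCast_dualRank (A : Finset E) :
    (M.dualRank A : ℤ) = M.r Aᶜ + A.card - M.r univ := by
  have := M.rank_univ_le_rank_compl_add_card A
  simp only [dualRank]
  omega

lemma natCast_dualRank_univ : (M.dualRank univ : ℤ) = Fintype.card E - M.r univ := by
  simp [natCast_dualRank, rank_empty]

lemma dualRank_le_dualRank_univ (A : Finset E) : M.dualRank A ≤ M.dualRank univ := by
  have := M.natCast_dualRank A
  have := M.natCast_dualRank_univ
  have := M.rank_le_card Aᶜ
  have : Aᶜ.card + A.card = Fintype.card E := card_compl_add_card A
  omega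

lemma dualRank_le_card (A : Finset E) : M.dualRank A ≤ A.card := by
  have := M.natCast_dualRank A
  have := M.rank_mono (subset_univ Aᶜ)
  omega

end RankMatroid

lemma jointTutteFn_eq_sum_zpow {E : Type*} [Fintype E] {K : Type*} [Field K]
    {r₁ r₂ : Finset E → ℕ} (h₁ : ∀ A, r₁ A ≤ r₁ univ) (h₂ : ∀ A, r₂ A ≤ A.card) (x y z : K) :
    jointTutteFn r₁ r₂ x y z =
      ∑ A : Finset E, (x - 1) ^ ((r₁ univ : ℤ) - r₁ A) * (y - 1) ^ ((A.card : ℤ) - r₂ A) *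
        (z - 1) ^ ((r₂ A : ℤ) + r₁ univ - r₁ A) := by
  refine sum_congr rfl fun A _ => ?_
  have h₃ : r₁ A ≤ r₂ A + r₁ univ := (h₁ A).trans (Nat.le_add_left _ _)
  rw [← Nat.cast_sub (h₁ A), ← Nat.cast_sub (h₂ A), ← Nat.cast_add, ← Nat.cast_sub h₃,
    zpow_natCast, zpow_natCast, zpow_natCast]

lemma jointTutteFn_dualRank {E : Type*} [Fintype E] [DecidableEq E] {K : Type*} [Field K]
    (M₁ M₂ : RankMatroid E) (x y z : K) :
    jointTutteFn M₁.dualRank M₂.dualRank x y z =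
      ∑ B : Finset E, (x - 1) ^ ((B.card : ℤ) - M₁.r B) *
        (y - 1) ^ ((M₂.r univ : ℤ) - M₂.r B) *
          (z - 1) ^ ((Fintype.card E : ℤ) - M₂.r univ + M₂.r B - M₁.r B) := by
  rw [jointTutteFn_eq_sum_zpow M₁.dualRank_le_dualRank_univ M₂.dualRank_le_card]
  refine Fintype.sum_equiv (compl_involutive.toPerm _) _ _ fun A => ?_
  have hcard : (Aᶜ.card : ℤ) + A.card = Fintype.card E := by exact_mod_cast card_compl_add_card A
  simp only [Function.Involutive.coe_toPerm, M₁.natCast_dualRank_univ, M₁.natCast_dualRank,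
    M₂.natCast_dualRank]
  rw [← hcard]
  ring_nf

/-- Proposition 3.2, second duality formula:
`S_{M₁*,M₂*}(X,Y,Z) = (X−1)^{−r₁(E)} (Y−1)^{r₂(E)} (Z−1)^{|E|−r₁(E)−r₂(E)}
· S_{M₁,M₂}(Y, X, 1 + (X−1)(Z−1)/(Y−1))`. -/
theorem jointTutte_duality_two (E : Type) [Fintype E] [DecidableEq E]
    (K : Type) [Field K] (M₁ M₂ : RankMatroid E)
    (x y z : K) (hx : x ≠ 1) (hy : y ≠ 1) (hz : z ≠ 1) :
    jointTutteFn M₁.dualRank M₂.dualRank x y z =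
      ((x - 1) ^ (M₁.r Finset.univ))⁻¹ * (y - 1) ^ (M₂.r Finset.univ) *
        (z - 1) ^ ((Fintype.card E : ℤ) - M₁.r Finset.univ - M₂.r Finset.univ) *
          jointTutteFn M₁.r M₂.r y x (1 + (x - 1) * (z - 1) / (y - 1)) := by
  have hx' : x - 1 ≠ 0 := sub_ne_zero.mpr hx
  have hy' : y - 1 ≠ 0 := sub_ne_zero.mpr hy
  have hz' : z - 1 ≠ 0 := sub_ne_zero.mpr hz
  rw [jointTutteFn_dualRank, jointTutteFn_eq_sum_zpow (fun A => M₁.rank_mono (subset_univ A))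
    M₂.rank_le_card, add_sub_cancel_left, mul_sum]
  refine sum_congr rfl fun B _ => ?_
  simp only [zpow_sub₀, zpow_add₀, hx', hy', hz', mul_zpow, div_eq_mul_inv, inv_zpow',
    zpow_neg, zpow_natCast, ne_eq, not_false_eq_true]
  field_simp
end

section
/- Let M₁=(E,r₁) and M₂=(E,r₂) be matroids on a common finite ground set E. Then the joint Tutte polynomial specializes to the Tutte polynomials of M₁ and of M₂ as follows: (i) S_{M₁,M₂}(X, Y, Y) = (Y−1)^{r₁(E)} · T_{M₁}(X, Y) for all X, Y in a field; and (ii) for all X, Y in a field with X ≠ 1, T_{M₂}(X, Y) = (X−1)^{r₂(E)} · S_{M₁,M₂}(X, Y, X/(X−1)). -/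
/-!
Both identities hold term by term in `A`. At `Z = Y` the two powers of `Y − 1` merge into
`(Y−1)^{r₁(E)} (Y−1)^{|A|−r₁(A)}`. At `Z = X/(X−1)` we have `Z − 1 = (X−1)⁻¹`, and the powers of
`X − 1` collapse to `(X−1)^{r₂(E)−r₂(A)}`. The bounds `r(A) ≤ |A|` and `r(A) ≤ r(E)` are what
make the truncated ℕ-subtractions in the exponents behave like integer ones.
-/

open Finset

theorem RankMatroid.r_le_r_univ {E : Type*} [Fintype E] [DecidableEq E] (M : RankMatroid E)
    (A : Finset E) : M.r A ≤ M.r univ :=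
  M.rank_mono (subset_univ A)

section JointTutte

variable {E : Type*} [Fintype E] [DecidableEq E] {K : Type*} [Field K]

theorem jointTutteFn_diag (M₁ M₂ : RankMatroid E) (x y : K) :
    jointTutteFn M₁.r M₂.r x y y = (y - 1) ^ M₁.r univ * tutteFn M₁.r x y := by
  rw [tutteFn, mul_sum]
  refine sum_congr rfl fun A _ => ?_
  have hexp : A.card - M₂.r A + (M₂.r A + M₁.r univ - M₁.r A) =
      M₁.r univ + (A.card - M₁.r A) := by
    have := M₁.rank_le_card A
    have := M₂.rank_le_card A
    have := M₁.r_le_r_univ A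
    omega
  rw [mul_assoc, ← pow_add, hexp, pow_add]
  ring

theorem pow_mul_pow_mul_inv_pow_eq {G : Type*} [CommGroupWithZero G] {u : G} (hu : u ≠ 0)
    {R₁ s₁ R₂ s₂ : ℕ} (h₁ : s₁ ≤ R₁) (h₂ : s₂ ≤ R₂) :
    u ^ R₂ * (u ^ (R₁ - s₁) * u⁻¹ ^ (s₂ + R₁ - s₁)) = u ^ (R₂ - s₂) := by
  obtain ⟨d₁, rfl⟩ := Nat.exists_eq_add_of_le h₁
  obtain ⟨d₂, rfl⟩ := Nat.exists_eq_add_of_le h₂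
  rw [Nat.add_sub_cancel_left, Nat.add_sub_cancel_left, Nat.add_left_comm,
    Nat.add_sub_cancel_left, ← mul_assoc, ← pow_add, inv_pow, ← div_eq_mul_inv, div_eq_iff (pow_ne_zero _ hu), ← pow_add]
  congr 1
  omega

theorem tutteFn_eq_pow_mul_jointTutteFn (M₁ M₂ : RankMatroid E) {x : K} (hx : x ≠ 1) (y : K) :
    tutteFn M₂.r x y = (x - 1) ^ M₂.r univ * jointTutteFn M₁.r M₂.r x y (x / (x - 1)) := by
  have hx₁ : x - 1 ≠ 0 := sub_ne_zero.mpr hx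
  have hz : x / (x - 1) - 1 = (x - 1)⁻¹ := by
    rw [div_sub_one hx₁, sub_sub_cancel, one_div]
  rw [jointTutteFn, mul_sum]
  refine sum_congr rfl fun A _ => ?_
  rw [hz, ← pow_mul_pow_mul_inv_pow_eq hx₁ (M₁.r_le_r_univ A) (M₂.r_le_r_univ A)]
  ring

end JointTutte

/-- Equations (3.2) and (3.3): the joint Tutte polynomial specializes to the
Tutte polynomials of `M₁` and of `M₂`. -/
theorem jointTutte_specializations (E : Type) [Fintype E] [DecidableEq E]
    (K : Type) [Field K] (M₁ M₂ : RankMatroid E) :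
    (∀ x y : K,
      jointTutteFn M₁.r M₂.r x y y = (y - 1) ^ (M₁.r Finset.univ) * tutteFn M₁.r x y) ∧
    (∀ x y : K, x ≠ 1 →
      tutteFn M₂.r x y =
        (x - 1) ^ (M₂.r Finset.univ) * jointTutteFn M₁.r M₂.r x y (x / (x - 1))) :=
  ⟨jointTutteFn_diag M₁ M₂, fun _ y hx => tutteFn_eq_pow_mul_jointTutteFn M₁ M₂ hx y⟩
end
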